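/- arXiv:1311.2515 — 3 statements merged into one kernel-verified Lean document; each statement's English description precedes it below -/
import Mathlib

section
/- Let V be a real inner product space with orthogonal almost complex structure J, and let R be an algebraic curvature tensor on V satisfying the constant-type-α identity: R(X,Y,X,Y) - R(X,Y,JX,JY) = α·(g(X,X)g(Y,Y) - g(X,Y)² - g(JX,Y)²) for all X, Y ∈ V. Let S ⊂ V be a proper J-invariant subspace such that R(X,ξ)W ∈ S for all X, W ∈ S and ξ ∈ S^⊥ (strong R-invariance in the relevant directions). If S ≠ 0 and S^⊥ ≠ 0, then α = 0. -/
/-!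
Take nonzero `X ∈ S` and `ξ ∈ Sᗮ`. By strong invariance, `R(X,ξ)X` and `R(X,ξ)JX` lie in `S`,
so both curvature terms of the constant-type identity for the pair `(X, ξ)` pair a vector of `S`
with `ξ` or `Jξ ∈ Sᗮ` and vanish, while its right-hand side reduces to `α |X|² |ξ|²`.
-/

open scoped RealInnerProductSpace

section

variable {V : Type*} [NormedAddCommGroup V] [InnerProductSpace ℝ V]

lemma map_mem_orthogonal_of_sq_eq_neg {J : V →ₗ[ℝ] V} (hJ2 : ∀ X, J (J X) = -X)
    (hJg : ∀ X Y, ⟪J X, J Y⟫ = ⟪X, Y⟫) {S : Submodule ℝ V} (hSJ : ∀ X ∈ S, J X ∈ S)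
    {ξ : V} (hξ : ξ ∈ Sᗮ) : J ξ ∈ Sᗮ := by
  intro u hu
  calc ⟪u, J ξ⟫ = ⟪J u, J (J ξ)⟫ := (hJg u (J ξ)).symm
    _ = -⟪J u, ξ⟫ := by rw [hJ2, inner_neg_right]
    _ = 0 := by rw [hξ (J u) (hSJ u hu), neg_zero]

lemma curvature_eq_zero_of_mem_of_mem_orthogonal
    {R : V →ₗ[ℝ] V →ₗ[ℝ] V →ₗ[ℝ] V →ₗ[ℝ] ℝ} {Rop : V → V → V → V}
    (hRop : ∀ A B C D, ⟪Rop A B C, D⟫ = R A B C D) {S : Submodule ℝ V} {A B C D : V}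
    (hABC : Rop A B C ∈ S) (hD : D ∈ Sᗮ) : R A B C D = 0 :=
  (hRop A B C D).symm.trans (hD _ hABC)

end

theorem stmt6_general {V : Type*} [NormedAddCommGroup V] [InnerProductSpace ℝ V]
    (J : V →ₗ[ℝ] V) (hJ2 : ∀ X, J (J X) = -X)
    (hJg : ∀ X Y, ⟪J X, J Y⟫ = ⟪X, Y⟫)
    (R : V →ₗ[ℝ] V →ₗ[ℝ] V →ₗ[ℝ] V →ₗ[ℝ] ℝ)
    (Rop : V → V → V → V)
    (hRop : ∀ A B C D, ⟪Rop A B C, D⟫ = R A B C D)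
    (α : ℝ)
    (hconst : ∀ X Y, R X Y X Y - R X Y (J X) (J Y)
        = α * (⟪X, X⟫ * ⟪Y, Y⟫ - ⟪X, Y⟫ ^ 2 - ⟪J X, Y⟫ ^ 2))
    (S : Submodule ℝ V) (hSJ : ∀ X ∈ S, J X ∈ S)
    (hStrong : ∀ X ∈ S, ∀ W ∈ S, ∀ ξ ∈ Sᗮ, Rop X ξ W ∈ S)
    (hS0 : S ≠ ⊥) (hS1 : Sᗮ ≠ ⊥) :
    α = 0 := by
  obtain ⟨X, hXS, hX0⟩ := Submodule.exists_mem_ne_zero_of_ne_bot hS0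
  obtain ⟨ξ, hξS, hξ0⟩ := Submodule.exists_mem_ne_zero_of_ne_bot hS1
  have hJXS : J X ∈ S := hSJ X hXS
  have hJξS : J ξ ∈ Sᗮ := map_mem_orthogonal_of_sq_eq_neg hJ2 hJg hSJ hξS
  have hXξ : R X ξ X ξ = 0 :=
    curvature_eq_zero_of_mem_of_mem_orthogonal hRop (hStrong X hXS X hXS ξ hξS) hξS
  have hXξJ : R X ξ (J X) (J ξ) = 0 :=
    curvature_eq_zero_of_mem_of_mem_orthogonal hRop (hStrong X hXS (J X) hJXS ξ hξS) hJξS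
  have hα : α * (⟪X, X⟫ * ⟪ξ, ξ⟫) = 0 := by
    simpa [hXξ, hXξJ, hξS X hXS, hξS (J X) hJXS] using (hconst X ξ).symm
  exact (mul_eq_zero.mp hα).resolve_right
    (mul_ne_zero (inner_self_ne_zero.mpr hX0) (inner_self_ne_zero.mpr hξ0))

/-- If an algebraic curvature tensor satisfies the constant-type-`α` identity
and admits a nonzero proper `J`-invariant subspace `S` with `R(X,ξ)W ∈ S`
for all `X, W ∈ S` and `ξ ∈ S^⊥`, then `α = 0`. -/
theorem stmt6 {V : Type*} [NormedAddCommGroup V] [InnerProductSpace ℝ V]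
    [FiniteDimensional ℝ V]
    (J : V →ₗ[ℝ] V) (hJ2 : ∀ X, J (J X) = -X)
    (hJg : ∀ X Y, ⟪J X, J Y⟫ = ⟪X, Y⟫)
    (R : V →ₗ[ℝ] V →ₗ[ℝ] V →ₗ[ℝ] V →ₗ[ℝ] ℝ)
    (hA1 : ∀ X Y Z W, R X Y Z W = - R Y X Z W)
    (hA2 : ∀ X Y Z W, R X Y Z W = - R X Y W Z)
    (hP : ∀ X Y Z W, R X Y Z W = R Z W X Y)
    (hB : ∀ X Y Z W, R X Y Z W + R Y Z X W + R Z X Y W = 0)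
    (Rop : V → V → V → V)
    (hRop : ∀ A B C D, ⟪Rop A B C, D⟫ = R A B C D)
    (α : ℝ)
    (hconst : ∀ X Y, R X Y X Y - R X Y (J X) (J Y)
        = α * (⟪X, X⟫ * ⟪Y, Y⟫ - ⟪X, Y⟫ ^ 2 - ⟪J X, Y⟫ ^ 2))
    (S : Submodule ℝ V) (hSJ : ∀ X ∈ S, J X ∈ S)
    (hStrong : ∀ X ∈ S, ∀ W ∈ S, ∀ ξ ∈ Sᗮ, Rop X ξ W ∈ S)
    (hS0 : S ≠ ⊥) (hS1 : Sᗮ ≠ ⊥) :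
    α = 0 :=
  stmt6_general J hJ2 hJg R Rop hRop α hconst S hSJ hStrong hS0 hS1
end

section
/- Let V be a real inner product space with orthogonal almost complex structure J and let R be an algebraic curvature tensor on V satisfying the weak-constant-type identity R(X,Y,X,Y) - 2R(X,Y,JX,JY) + R(JX,JY,JX,JY) = 2α(g(X,X)g(Y,Y) - g(X,Y)² - g(JX,Y)²) with α ≠ 0. Then there is no nonzero proper J-invariant subspace S of V with R(X,Y)(S) ⊆ S for all X, Y ∈ V. -/
open scoped RealInnerProductSpace

/-! If `S` is a nonzero proper `J`-invariant subspace with `R(X,Y)S ⊆ S`, then `Sᗮ` is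
`J`-invariant too, and `R(A,B,Z,W) = ⟪R(A,B)Z, W⟫` vanishes for `Z ∈ S`, `W ∈ Sᗮ`. For
nonzero `X ∈ S` and `ξ ∈ Sᗮ` the left side of the weak-constant-type identity therefore
vanishes, while its right side is `2α ‖X‖² ‖ξ‖² ≠ 0`. -/

section

variable {V : Type*} [NormedAddCommGroup V] [InnerProductSpace ℝ V] {J : V →ₗ[ℝ] V}

theorem inner_map_right_eq_neg_inner_map_left (hJ2 : ∀ X, J (J X) = -X)
    (hJg : ∀ X Y, ⟪J X, J Y⟫ = ⟪X, Y⟫) (X Y : V) : ⟪X, J Y⟫ = -⟪J X, Y⟫ := by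
  rw [← hJg X (J Y), hJ2, inner_neg_right]

theorem Submodule.apply_mem_orthogonal_of_skew (hskew : ∀ X Y, ⟪X, J Y⟫ = -⟪J X, Y⟫)
    {S : Submodule ℝ V} (hJS : ∀ X ∈ S, J X ∈ S) {ξ : V} (hξ : ξ ∈ Sᗮ) : J ξ ∈ Sᗮ := by
  rw [Submodule.mem_orthogonal] at hξ ⊢
  intro u hu
  rw [hskew, hξ _ (hJS u hu), neg_zero]

end

theorem stmt8_general {V : Type*} [NormedAddCommGroup V] [InnerProductSpace ℝ V]
    [FiniteDimensional ℝ V]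
    (J : V →ₗ[ℝ] V) (hJ2 : ∀ X, J (J X) = -X)
    (hJg : ∀ X Y, ⟪J X, J Y⟫ = ⟪X, Y⟫)
    (R : V →ₗ[ℝ] V →ₗ[ℝ] V →ₗ[ℝ] V →ₗ[ℝ] ℝ)
    (Rop : V → V → V → V)
    (hRop : ∀ A B C D, ⟪Rop A B C, D⟫ = R A B C D)
    (α : ℝ) (hα : α ≠ 0)
    (hweak : ∀ X Y, R X Y X Y - 2 * R X Y (J X) (J Y)
        + R (J X) (J Y) (J X) (J Y)
        = 2 * α * (⟪X, X⟫ * ⟪Y, Y⟫ - ⟪X, Y⟫ ^ 2 - ⟪J X, Y⟫ ^ 2)) :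
    ¬ ∃ S : Submodule ℝ V, S ≠ ⊥ ∧ S ≠ ⊤ ∧ (∀ X ∈ S, J X ∈ S) ∧
      (∀ X Y : V, ∀ Z ∈ S, Rop X Y Z ∈ S) := by
  rintro ⟨S, hbot, htop, hJS, hRS⟩
  obtain ⟨X, hXS, hX0⟩ := Submodule.exists_mem_ne_zero_of_ne_bot hbot
  obtain ⟨ξ, hξS, hξ0⟩ := Submodule.exists_mem_ne_zero_of_ne_bot
    (mt Submodule.orthogonal_eq_bot_iff.mp htop)
  have hJξ : J ξ ∈ Sᗮ := Submodule.apply_mem_orthogonal_of_skew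
    (inner_map_right_eq_neg_inner_map_left hJ2 hJg) hJS hξS
  have hvanish : ∀ A B, ∀ Z ∈ S, ∀ W ∈ Sᗮ, R A B Z W = 0 := fun A B Z hZ W hW => by
    rw [← hRop]
    exact Submodule.inner_right_of_mem_orthogonal (hRS A B Z hZ) hW
  have hw := hweak X ξ
  rw [hvanish X ξ X hXS ξ hξS, hvanish X ξ _ (hJS X hXS) _ hJξ,
    hvanish _ _ _ (hJS X hXS) _ hJξ, Submodule.inner_right_of_mem_orthogonal hXS hξS,
    Submodule.inner_right_of_mem_orthogonal (hJS X hXS) hξS] at hw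
  have hXX : 0 < ⟪X, X⟫ := real_inner_self_pos.mpr hX0
  have hξξ : 0 < ⟪ξ, ξ⟫ := real_inner_self_pos.mpr hξ0
  have : α * (⟪X, X⟫ * ⟪ξ, ξ⟫) = 0 := by linear_combination (-1 / 2 : ℝ) * hw
  exact mul_ne_zero hα (mul_pos hXX hξξ).ne' this

/-- If an algebraic curvature tensor satisfies the weak-constant-type identity
with `α ≠ 0`, then there is no nonzero proper `J`-invariant strongly
`R`-invariant subspace. -/
theorem stmt8 {V : Type*} [NormedAddCommGroup V] [InnerProductSpace ℝ V]
    [FiniteDimensional ℝ V]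
    (J : V →ₗ[ℝ] V) (hJ2 : ∀ X, J (J X) = -X)
    (hJg : ∀ X Y, ⟪J X, J Y⟫ = ⟪X, Y⟫)
    (R : V →ₗ[ℝ] V →ₗ[ℝ] V →ₗ[ℝ] V →ₗ[ℝ] ℝ)
    (hA1 : ∀ X Y Z W, R X Y Z W = - R Y X Z W)
    (hA2 : ∀ X Y Z W, R X Y Z W = - R X Y W Z)
    (hP : ∀ X Y Z W, R X Y Z W = R Z W X Y)
    (hB : ∀ X Y Z W, R X Y Z W + R Y Z X W + R Z X Y W = 0)
    (Rop : V → V → V → V)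
    (hRop : ∀ A B C D, ⟪Rop A B C, D⟫ = R A B C D)
    (α : ℝ) (hα : α ≠ 0)
    (hweak : ∀ X Y, R X Y X Y - 2 * R X Y (J X) (J Y)
        + R (J X) (J Y) (J X) (J Y)
        = 2 * α * (⟪X, X⟫ * ⟪Y, Y⟫ - ⟪X, Y⟫ ^ 2 - ⟪J X, Y⟫ ^ 2)) :
    ¬ ∃ S : Submodule ℝ V, S ≠ ⊥ ∧ S ≠ ⊤ ∧ (∀ X ∈ S, J X ∈ S) ∧
      (∀ X Y : V, ∀ Z ∈ S, Rop X Y Z ∈ S) :=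
  stmt8_general J hJ2 hJg R Rop hRop α hα hweak
end

section
/- Let V be a real inner product space with orthogonal almost complex structure J, and let R be an algebraic curvature tensor satisfying the AH₂ identity: R(X,Y,Z,W) = R(JX,JY,Z,W) + R(JX,Y,JZ,W) + R(JX,Y,Z,JW) for all X,Y,Z,W. Then R satisfies the AH₃ identity R(X,Y,Z,W) = R(JX,JY,JZ,JW) for all X,Y,Z,W (i.e., AH₂ ⊆ AH₃). -/
/-!
Since `J² = -1`, `AH₂` at `JX` moves `J` off the first slot: `R(JX,Y,Z,W)` is minus the sum of
the three terms with `J` on one of `Y, Z, W`. Rewriting with this, `AH₂` at `X` becomes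
`R(X,Y,Z,W) = 3R(X,Y,Z,W) - 2s` and `R(JX,JY,JZ,JW)` becomes `s`, where
`s = R(X,JY,JZ,W) + R(X,JY,Z,JW) + R(X,Y,JZ,JW)`.
-/

open scoped RealInnerProductSpace

namespace AlmostHermitian

variable {K V : Type*} [Field K] [AddCommGroup V] [Module K V]

def AH₂ (J : V →ₗ[K] V) (R : V →ₗ[K] V →ₗ[K] V →ₗ[K] V →ₗ[K] K) : Prop :=
  ∀ X Y Z W, R X Y Z W = R (J X) (J Y) Z W + R (J X) Y (J Z) W + R (J X) Y Z (J W)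

def AH₃ (J : V →ₗ[K] V) (R : V →ₗ[K] V →ₗ[K] V →ₗ[K] V →ₗ[K] K) : Prop :=
  ∀ X Y Z W, R X Y Z W = R (J X) (J Y) (J Z) (J W)

variable {J : V →ₗ[K] V} {R : V →ₗ[K] V →ₗ[K] V →ₗ[K] V →ₗ[K] K}

-- `map_neg` does not apply here: instance search fails to find `AddCommGroup` on
-- `V →ₗ[K] V →ₗ[K] V →ₗ[K] K`.
theorem apply_neg_first (R : V →ₗ[K] V →ₗ[K] V →ₗ[K] V →ₗ[K] K) (X Y Z W : V) :
    R (-X) Y Z W = -R X Y Z W := by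
  rw [← neg_one_smul K X, map_smul]
  simp only [LinearMap.smul_apply, smul_eq_mul, neg_one_mul]

theorem AH₂.apply_J_first (hJ2 : ∀ X, J (J X) = -X) (h : AH₂ J R) (X Y Z W : V) :
    R (J X) Y Z W = -(R X (J Y) Z W + R X Y (J Z) W + R X Y Z (J W)) := by
  rw [h (J X), hJ2, apply_neg_first, apply_neg_first, apply_neg_first]
  ring

theorem AH₂.sum_J_pairs [NeZero (2 : K)] (hJ2 : ∀ X, J (J X) = -X) (h : AH₂ J R)
    (X Y Z W : V) :
    R X (J Y) (J Z) W + R X (J Y) Z (J W) + R X Y (J Z) (J W) = R X Y Z W := by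
  have key := h X Y Z W
  simp only [h.apply_J_first hJ2, hJ2, map_neg, LinearMap.neg_apply] at key
  apply mul_left_cancel₀ (two_ne_zero : (2 : K) ≠ 0)
  linear_combination key

theorem AH₂.AH₃ [NeZero (2 : K)] (hJ2 : ∀ X, J (J X) = -X) (h : AH₂ J R) : AH₃ J R := by
  intro X Y Z W
  rw [h.apply_J_first hJ2, ← h.sum_J_pairs hJ2 X Y Z W]
  simp only [hJ2, map_neg, LinearMap.neg_apply]
  ring

end AlmostHermitian

theorem stmt10_general {V : Type*} [NormedAddCommGroup V] [InnerProductSpace ℝ V]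
    (J : V →ₗ[ℝ] V) (hJ2 : ∀ X, J (J X) = -X)
    (R : V →ₗ[ℝ] V →ₗ[ℝ] V →ₗ[ℝ] V →ₗ[ℝ] ℝ)
    (hAH2 : ∀ X Y Z W, R X Y Z W =
      R (J X) (J Y) Z W + R (J X) Y (J Z) W + R (J X) Y Z (J W)) :
    ∀ X Y Z W, R X Y Z W = R (J X) (J Y) (J Z) (J W) :=
  AlmostHermitian.AH₂.AH₃ hJ2 hAH2

/-- An algebraic curvature tensor satisfying the `AH₂` identity satisfies the
`AH₃` identity (i.e. `AH₂ ⊆ AH₃`). -/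
theorem stmt10 {V : Type*} [NormedAddCommGroup V] [InnerProductSpace ℝ V]
    [FiniteDimensional ℝ V]
    (J : V →ₗ[ℝ] V) (hJ2 : ∀ X, J (J X) = -X)
    (hJg : ∀ X Y, ⟪J X, J Y⟫ = ⟪X, Y⟫)
    (R : V →ₗ[ℝ] V →ₗ[ℝ] V →ₗ[ℝ] V →ₗ[ℝ] ℝ)
    (hA1 : ∀ X Y Z W, R X Y Z W = - R Y X Z W)
    (hA2 : ∀ X Y Z W, R X Y Z W = - R X Y W Z)
    (hP : ∀ X Y Z W, R X Y Z W = R Z W X Y)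
    (hB : ∀ X Y Z W, R X Y Z W + R Y Z X W + R Z X Y W = 0)
    (hAH2 : ∀ X Y Z W, R X Y Z W =
      R (J X) (J Y) Z W + R (J X) Y (J Z) W + R (J X) Y Z (J W)) :
    ∀ X Y Z W, R X Y Z W = R (J X) (J Y) (J Z) (J W) :=
  stmt10_general J hJ2 R hAH2
end
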